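/- arXiv:1003.3302 — 5 statements merged into one kernel-verified Lean document; each statement's English description precedes it below -/
import Mathlib

section
/- Let M satisfy M_{k+1} ≤ H_1 H_2^k M_k for all k with H_1, H_2 > 1, set ε_m = H_2^{-m} and ω_m(r) = ω_M(H_2^m r). Then for each m, p ∈ ℕ there exists c ≥ 0 such that ω_m(r) + p·ln(1+r) ≤ ω_{m+p}(r) + c for all r ≥ 0. -/
open Filter

/-- The associated function `ω_M(r) = sup_{k ≥ 0} ln(r^k / M_k)`, with `ω_M(0) = 0`. -/
noncomputable def omegaM (M : ℕ → ℝ) (r : ℝ) : ℝ :=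
  if r = 0 then 0 else ⨆ k : ℕ, ((k : ℝ) * Real.log r - Real.log (M k))

lemma omegaM_bdd (M : ℕ → ℝ)
    (hlim : Tendsto (fun k : ℕ => Real.log (M k) / (k : ℝ)) atTop atTop) (r : ℝ) :
    BddAbove (Set.range fun k : ℕ => ((k : ℝ) * Real.log r - Real.log (M k))) := by
  apply Filter.IsBoundedUnder.bddAbove_range
  apply Filter.isBoundedUnder_of_eventually_le (a := (0:ℝ))
  have h := hlim.eventually_ge_atTop (Real.log r + 1)
  filter_upwards [h, Filter.eventually_gt_atTop 0] with k hk hk0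
  have hk0' : (0 : ℝ) < (k : ℝ) := by exact_mod_cast hk0
  have : ((k : ℝ)) * (Real.log r + 1) ≤ Real.log (M k) := by
    rw [le_div_iff₀ hk0'] at hk
    linarith [hk]
  nlinarith

lemma le_omegaM (M : ℕ → ℝ)
    (hlim : Tendsto (fun k : ℕ => Real.log (M k) / (k : ℝ)) atTop atTop) {r : ℝ} (hr : r ≠ 0)
    (k : ℕ) : (k : ℝ) * Real.log r - Real.log (M k) ≤ omegaM M r := by
  rw [omegaM, if_neg hr]
  exact le_ciSup (omegaM_bdd M hlim r) k

lemma omegaM_nonneg (M : ℕ → ℝ) (h0 : M 0 = 1)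
    (hlim : Tendsto (fun k : ℕ => Real.log (M k) / (k : ℝ)) atTop atTop) (r : ℝ) :
    0 ≤ omegaM M r := by
  rcases eq_or_ne r 0 with h | h
  · simp [omegaM, h]
  · have := le_omegaM M hlim h 0
    simpa [h0] using this

lemma omegaM_le (M : ℕ → ℝ) {r : ℝ} (hr : r ≠ 0) {c : ℝ}
    (h : ∀ k : ℕ, (k : ℝ) * Real.log r - Real.log (M k) ≤ c) : omegaM M r ≤ c := by
  rw [omegaM, if_neg hr]
  exact ciSup_le h

lemma omegaM_mono (M : ℕ → ℝ)
    (hlim : Tendsto (fun k : ℕ => Real.log (M k) / (k : ℝ)) atTop atTop)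
    {r s : ℝ} (hr : 0 < r) (hrs : r ≤ s) : omegaM M r ≤ omegaM M s := by
  have hs : 0 < s := lt_of_lt_of_le hr hrs
  refine omegaM_le M hr.ne' fun k => ?_
  have : (k : ℝ) * Real.log r ≤ (k : ℝ) * Real.log s :=
    mul_le_mul_of_nonneg_left (Real.log_le_log hr hrs) (Nat.cast_nonneg k)
  have h2 := le_omegaM M hlim hs.ne' k
  linarith

/-- One-step estimate: `ω_M(s) + log s ≤ ω_M(H2 s) + log H1` for `s > 0`. -/
lemma omegaM_step (M : ℕ → ℝ) (hpos : ∀ k, 0 < M k) (H1 H2 : ℝ) (hH1 : 1 < H1) (hH2 : 1 < H2)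
    (hrec : ∀ k : ℕ, M (k + 1) ≤ H1 * H2 ^ k * M k)
    (hlim : Tendsto (fun k : ℕ => Real.log (M k) / (k : ℝ)) atTop atTop)
    {s : ℝ} (hs : 0 < s) :
    omegaM M s + Real.log s ≤ omegaM M (H2 * s) + Real.log H1 := by
  have hH2s : 0 < H2 * s := mul_pos (lt_trans one_pos hH2) hs
  have key : omegaM M s ≤ omegaM M (H2 * s) + Real.log H1 - Real.log s := by
    refine omegaM_le M hs.ne' fun k => ?_
    have hM : Real.log (M (k + 1)) ≤ Real.log H1 + (k : ℝ) * Real.log H2 + Real.log (M k) := by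
      have := Real.log_le_log (hpos (k + 1)) (hrec k)
      rw [Real.log_mul (by positivity) (hpos k).ne', Real.log_mul (by positivity) (by positivity),
        Real.log_pow] at this
      linarith
    have h2 := le_omegaM M hlim hH2s.ne' (k + 1)
    rw [Real.log_mul (by positivity) hs.ne'] at h2
    push_cast at h2
    have hlogH2 : 0 < Real.log H2 := Real.log_pos hH2
    nlinarith [hlogH2]
  linarith

lemma omegaM_one_step (M : ℕ → ℝ) (hpos : ∀ k, 0 < M k) (h0 : M 0 = 1)
    (H1 H2 : ℝ) (hH1 : 1 < H1) (hH2 : 1 < H2)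
    (hrec : ∀ k : ℕ, M (k + 1) ≤ H1 * H2 ^ k * M k)
    (hlim : Tendsto (fun k : ℕ => Real.log (M k) / (k : ℝ)) atTop atTop)
    (m : ℕ) {r : ℝ} (hr : 0 ≤ r) :
    omegaM M (H2 ^ m * r) + Real.log (1 + r) ≤
      omegaM M (H2 ^ (m + 1) * r) + (Real.log H1 + Real.log 2) := by
  have hH2' : 0 < H2 := lt_trans one_pos hH2
  have hH1' : 0 ≤ Real.log H1 := Real.log_nonneg hH1.le
  have hlog2 : 0 ≤ Real.log 2 := Real.log_nonneg one_le_two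
  rcases eq_or_lt_of_le hr with h | h
  · simp [omegaM, ← h]; positivity
  have hpm : (0 : ℝ) < H2 ^ m * r := by positivity
  have hpm1 : H2 ^ m * r ≤ H2 ^ (m + 1) * r := by
    have : H2 ^ m ≤ H2 ^ (m + 1) := pow_le_pow_right₀ hH2.le (Nat.le_succ m)
    nlinarith
  rcases le_or_gt r 1 with h1 | h1
  · have hl : Real.log (1 + r) ≤ Real.log 2 := Real.log_le_log (by linarith) (by linarith)
    have := omegaM_mono M hlim hpm hpm1
    linarith
  · -- r > 1
    have hge1 : (1 : ℝ) ≤ H2 ^ m * r := by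
      have : (1 : ℝ) ≤ H2 ^ m := one_le_pow₀ (n := m) hH2.le
      nlinarith
    have hl : Real.log (1 + r) ≤ Real.log 2 + Real.log (H2 ^ m * r) := by
      rw [← Real.log_mul two_ne_zero hpm.ne']
      apply Real.log_le_log (by linarith)
      nlinarith [one_le_pow₀ (n := m) hH2.le]
    have hstep := omegaM_step M hpos H1 H2 hH1 hH2 hrec hlim hpm
    have heq : H2 * (H2 ^ m * r) = H2 ^ (m + 1) * r := by ring
    rw [heq] at hstep
    linarith

/-- With `ε_m = H_2^{-m}` and `ω_m(r) = ω_M(r/ε_m) = ω_M(H_2^m r)`, for each `m, p` there is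
`c ≥ 0` with `ω_m(r) + p ln(1+r) ≤ ω_{m+p}(r) + c` for all `r ≥ 0`. -/
theorem omega_shift_estimate (M : ℕ → ℝ) (hpos : ∀ k, 0 < M k) (hmono : Monotone M)
    (h0 : M 0 = 1) (H1 H2 : ℝ) (hH1 : 1 < H1) (hH2 : 1 < H2)
    (hrec : ∀ k : ℕ, M (k + 1) ≤ H1 * H2 ^ k * M k)
    (hlim : Tendsto (fun k : ℕ => Real.log (M k) / (k : ℝ)) atTop atTop) :
    ∀ m p : ℕ, ∃ c : ℝ, 0 ≤ c ∧ ∀ r : ℝ, 0 ≤ r →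
      omegaM M (H2 ^ m * r) + (p : ℝ) * Real.log (1 + r) ≤ omegaM M (H2 ^ (m + p) * r) + c := by
  intro m p
  induction p with
  | zero => exact ⟨0, le_refl 0, fun r hr => by simp⟩
  | succ p ih =>
    obtain ⟨c, hc, hih⟩ := ih
    have hH1' : 0 ≤ Real.log H1 := Real.log_nonneg hH1.le
    have hlog2 : 0 ≤ Real.log 2 := Real.log_nonneg one_le_two
    refine ⟨c + (Real.log H1 + Real.log 2), by linarith, fun r hr => ?_⟩
    have h1 := hih r hr
    have h2 := omegaM_one_step M hpos h0 H1 H2 hH1 hH2 hrec hlim (m + p) hr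
    have hlog : 0 ≤ Real.log (1 + r) := Real.log_nonneg (by linarith)
    push_cast
    have heq : m + (p + 1) = (m + p) + 1 := by ring
    rw [heq]
    nlinarith
end

section
/- Let M = (M_k) satisfy M_0 = 1, M_k^2 ≤ M_{k-1}M_{k+1} for k ≥ 1, and M_k ≥ Q_1 Q_2^k k! for some Q_1, Q_2 > 0. Then for each fixed scaling of the argument the function ω_M is Lipschitz: there exists K > 0 with |ω_M(r_2) − ω_M(r_1)| ≤ K|r_2 − r_1| for all r_1, r_2 ≥ 0. -/
private lemma pow_le_factorial_mul_exp {s : ℝ} (hs : 0 ≤ s) (k : ℕ) :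
    s ^ k ≤ (Nat.factorial k : ℝ) * Real.exp s := by
  have h := Real.sum_le_exp_of_nonneg hs (k + 1)
  have hterm : s ^ k / (Nat.factorial k : ℝ) ≤
      ∑ i ∈ Finset.range (k + 1), s ^ i / (Nat.factorial i : ℝ) := by
    apply Finset.single_le_sum (f := fun i => s ^ i / (Nat.factorial i : ℝ))
    · intro i _
      positivity
    · simp
  have hk : (0 : ℝ) < (Nat.factorial k : ℝ) := by positivity
  have := hterm.trans h
  rw [div_le_iff₀ hk] at this
  linarith [this]

private lemma mul_log_le_log_factorial_add {s : ℝ} (hs : 0 ≤ s) (k : ℕ) :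
    (k : ℝ) * Real.log s ≤ Real.log (Nat.factorial k : ℝ) + s := by
  have hfac : (1 : ℝ) ≤ (Nat.factorial k : ℝ) := by
    exact_mod_cast Nat.one_le_iff_ne_zero.mpr (Nat.factorial_ne_zero k)
  rcases eq_or_lt_of_le hs with h | h
  · rw [← h, Real.log_zero, mul_zero]
    have := Real.log_nonneg hfac
    linarith
  · have h1 : s ^ k ≤ (Nat.factorial k : ℝ) * Real.exp s := pow_le_factorial_mul_exp hs k
    have h2 : Real.log (s ^ k) ≤ Real.log ((Nat.factorial k : ℝ) * Real.exp s) :=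
      Real.log_le_log (pow_pos h k) h1
    rw [Real.log_pow, Real.log_mul (by positivity) (Real.exp_pos s).ne',
      Real.log_exp] at h2
    exact_mod_cast h2

set_option maxHeartbeats 1000000 in
theorem omegaM_lipschitz (M : ℕ → ℝ) (hpos : ∀ k, 0 < M k) (hmono : Monotone M)
    (h0 : M 0 = 1)
    (hconv : ∀ k : ℕ, 1 ≤ k → (M k) ^ 2 ≤ M (k - 1) * M (k + 1))
    (Q1 Q2 : ℝ) (hQ1 : 0 < Q1) (hQ2 : 0 < Q2)
    (hlow : ∀ k : ℕ, Q1 * Q2 ^ k * (Nat.factorial k : ℝ) ≤ M k) :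
    ∃ K : ℝ, 0 < K ∧ ∀ r1 r2 : ℝ, 0 ≤ r1 → 0 ≤ r2 →
      |omegaM M r2 - omegaM M r1| ≤ K * |r2 - r1| := by
  -- setup of constants
  set q : ℝ := min Q1 1 with hq
  have hq0 : 0 < q := lt_min hQ1 one_pos
  have hq1 : q ≤ 1 := min_le_right _ _
  have hqQ1 : q ≤ Q1 := min_le_left _ _
  set C : ℝ := Real.exp 1 / (q * Q2) with hC
  have hC0 : 0 < C := div_pos (Real.exp_pos 1) (mul_pos hq0 hQ2)
  set K0 : ℝ := 1 / Q2 + |Real.log Q1| with hK0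
  have hK00 : 0 < K0 := by positivity
  set K : ℝ := 2 * C + 2 * K0 with hK
  have hKpos : 0 < K := by positivity
  refine ⟨K, hKpos, ?_⟩
  -- basic facts
  have homega : ∀ r : ℝ, r ≠ 0 →
      omegaM M r = ⨆ k : ℕ, ((k : ℝ) * Real.log r - Real.log (M k)) :=
    fun r hr => if_neg hr
  have hlogM : ∀ k : ℕ, Real.log Q1 + (k : ℝ) * Real.log Q2 +
      Real.log (Nat.factorial k : ℝ) ≤ Real.log (M k) := by
    intro k
    have h1 : Real.log (Q1 * Q2 ^ k * (Nat.factorial k : ℝ)) ≤ Real.log (M k) :=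
      Real.log_le_log (by positivity) (hlow k)
    rw [Real.log_mul (by positivity) (by positivity),
      Real.log_mul (by positivity) (by positivity), Real.log_pow] at h1
    linarith
  have hfb : ∀ r : ℝ, 0 < r → ∀ k : ℕ,
      (k : ℝ) * Real.log r - Real.log (M k) ≤ r / Q2 + |Real.log Q1| := by
    intro r hr k
    have h1 := mul_log_le_log_factorial_add (le_of_lt (div_pos hr hQ2)) k
    rw [Real.log_div hr.ne' hQ2.ne', mul_sub] at h1
    have h3 := hlogM k
    have h4 := neg_abs_le (Real.log Q1)
    linarith
  have hbdd : ∀ r : ℝ, 0 < r →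
      BddAbove (Set.range fun k : ℕ => (k : ℝ) * Real.log r - Real.log (M k)) := by
    intro r hr
    exact ⟨r / Q2 + |Real.log Q1|, by rintro x ⟨k, rfl⟩; exact hfb r hr k⟩
  have hnn : ∀ r : ℝ, 0 ≤ r → 0 ≤ omegaM M r := by
    intro r hr
    rcases eq_or_lt_of_le hr with h | h
    · simp [omegaM, ← h]
    · rw [homega r h.ne']
      have h2 := le_ciSup (hbdd r h) 0
      simpa [h0] using h2
  have hub : ∀ r : ℝ, 0 < r → omegaM M r ≤ r / Q2 + |Real.log Q1| := by
    intro r hr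
    rw [homega r hr.ne']
    exact ciSup_le (hfb r hr)
  have hM1 : (1 : ℝ) ≤ M 1 := by rw [← h0]; exact hmono (Nat.zero_le 1)
  have hM1pos : (0 : ℝ) < M 1 := lt_of_lt_of_le one_pos hM1
  -- log-convexity consequences
  have hstep : ∀ k : ℕ, M 1 * M k ≤ M (k + 1) := by
    intro k
    induction k with
    | zero => simp [h0]
    | succ n ih =>
      have hc : M (n + 1) ^ 2 ≤ M n * M (n + 2) := by
        have := hconv (n + 1) (Nat.le_add_left 1 n)
        simpa using this
      have h1 : M 1 * M n * M (n + 1) ≤ M (n + 1) ^ 2 := by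
        nlinarith [hpos (n + 1), ih]
      have h2 : M n * (M 1 * M (n + 1)) ≤ M n * M (n + 2) := by nlinarith [h1, hc]
      exact le_of_mul_le_mul_left h2 (hpos n)
  have hpowM : ∀ k : ℕ, M 1 ^ k ≤ M k := by
    intro k
    induction k with
    | zero => simp [h0]
    | succ n ih =>
      calc M 1 ^ (n + 1) = M 1 * M 1 ^ n := by ring
        _ ≤ M 1 * M n := mul_le_mul_of_nonneg_left ih hM1pos.le
        _ ≤ M (n + 1) := hstep n
  -- ω vanishes on [0, M 1]
  have hzero : ∀ r : ℝ, 0 ≤ r → r ≤ M 1 → omegaM M r = 0 := by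
    intro r hr hrM
    rcases eq_or_lt_of_le hr with h | h
    · simp [omegaM, ← h]
    · refine le_antisymm ?_ (hnn r hr)
      rw [homega r h.ne']
      apply ciSup_le
      intro k
      have h1 : Real.log r ≤ Real.log (M 1) := Real.log_le_log h hrM
      have h2 : (k : ℝ) * Real.log (M 1) ≤ Real.log (M k) := by
        rw [← Real.log_pow]
        exact Real.log_le_log (pow_pos hM1pos k) (hpowM k)
      have h3 : (k : ℝ) * Real.log r ≤ (k : ℝ) * Real.log (M 1) :=
        mul_le_mul_of_nonneg_left h1 (Nat.cast_nonneg k)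
      linarith
  -- monotonicity of ω
  have hmonoO : ∀ r1 r2 : ℝ, 0 ≤ r1 → r1 ≤ r2 → omegaM M r1 ≤ omegaM M r2 := by
    intro r1 r2 hr1 hr12
    rcases eq_or_lt_of_le hr1 with h | h
    · rw [show omegaM M r1 = 0 by simp [omegaM, ← h]]
      exact hnn r2 (le_trans hr1 hr12)
    · have hr2 : 0 < r2 := lt_of_lt_of_le h hr12
      rw [homega r1 h.ne', homega r2 hr2.ne']
      apply ciSup_mono (hbdd r2 hr2)
      intro k
      have h1 : Real.log r1 ≤ Real.log r2 := Real.log_le_log h hr12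
      have h2 : (k : ℝ) * Real.log r1 ≤ (k : ℝ) * Real.log r2 :=
        mul_le_mul_of_nonneg_left h1 (Nat.cast_nonneg k)
      linarith
  -- bound on maximizing indices
  have hkb : ∀ r : ℝ, 0 < r → ∀ k : ℕ,
      0 ≤ (k : ℝ) * Real.log r - Real.log (M k) → (k : ℝ) ≤ C * r := by
    intro r hr k hk
    rcases Nat.eq_zero_or_pos k with h | h
    · subst h
      simp only [Nat.cast_zero]
      positivity
    · have hkne : k ≠ 0 := Nat.pos_iff_ne_zero.mp h
      -- M k ≤ r ^ k
      have h1 : Real.log (M k) ≤ Real.log (r ^ k) := by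
        rw [Real.log_pow]; linarith
      have h2 : M k ≤ r ^ k :=
        (Real.log_le_log_iff (hpos k) (pow_pos hr k)).mp h1
      -- k^k ≤ k! * e^k
      have h3 : ((k : ℝ)) ^ k ≤ (Nat.factorial k : ℝ) * Real.exp k :=
        pow_le_factorial_mul_exp (Nat.cast_nonneg k) k
      have hexp : Real.exp (k : ℝ) = Real.exp 1 ^ k := by
        rw [← Real.exp_nat_mul, mul_one]
      have key : (q * Q2 * k / Real.exp 1) ^ k ≤ r ^ k := by
        have e1 : (q * Q2 * (k : ℝ) / Real.exp 1) ^ k =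
            q ^ k * (Q2 ^ k * ((k : ℝ) ^ k / Real.exp 1 ^ k)) := by
          rw [div_pow, mul_pow, mul_pow]; ring
        have hqk : q ^ k ≤ q := by simpa using pow_le_pow_of_le_one hq0.le hq1 h
        have hkk : ((k : ℝ)) ^ k / Real.exp 1 ^ k ≤ (Nat.factorial k : ℝ) := by
          rw [div_le_iff₀ (by positivity)]
          rw [← hexp]
          exact h3
        have hstep1 : q ^ k * (Q2 ^ k * ((k : ℝ) ^ k / Real.exp 1 ^ k)) ≤
            q * (Q2 ^ k * (Nat.factorial k : ℝ)) := by
          apply mul_le_mul hqk _ (by positivity) hq0.le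
          exact mul_le_mul_of_nonneg_left hkk (by positivity)
        have hstep2 : q * (Q2 ^ k * (Nat.factorial k : ℝ)) ≤
            Q1 * Q2 ^ k * (Nat.factorial k : ℝ) := by
          have : q * (Q2 ^ k * (Nat.factorial k : ℝ)) ≤
              Q1 * (Q2 ^ k * (Nat.factorial k : ℝ)) :=
            mul_le_mul_of_nonneg_right hqQ1 (by positivity)
          linarith [this]
        rw [e1]
        calc q ^ k * (Q2 ^ k * ((k : ℝ) ^ k / Real.exp 1 ^ k))
            ≤ Q1 * Q2 ^ k * (Nat.factorial k : ℝ) := hstep1.trans hstep2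
          _ ≤ M k := hlow k
          _ ≤ r ^ k := h2
      have h4 : q * Q2 * (k : ℝ) / Real.exp 1 ≤ r :=
        le_of_pow_le_pow_left₀ hkne hr.le key
      rw [div_le_iff₀ (Real.exp_pos 1)] at h4
      rw [hC, div_mul_eq_mul_div, le_div_iff₀ (mul_pos hq0 hQ2)]
      nlinarith [h4]
  -- main one-sided estimate for M 1 ≤ r1 ≤ r2
  have main : ∀ r1 r2 : ℝ, M 1 ≤ r1 → r1 ≤ r2 →
      omegaM M r2 - omegaM M r1 ≤ K * (r2 - r1) := by
    intro r1 r2 hr1 hr12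
    have hr11 : (1 : ℝ) ≤ r1 := le_trans hM1 hr1
    have hr1p : 0 < r1 := lt_of_lt_of_le one_pos hr11
    have hr2p : 0 < r2 := lt_of_lt_of_le hr1p hr12
    have hrsub : 0 ≤ r2 - r1 := by linarith
    rcases le_or_gt r2 (2 * r1) with hcase | hcase
    · -- moderate growth case
      have hstep2 : omegaM M r2 ≤ omegaM M r1 + 2 * C * (r2 - r1) := by
        rw [homega r2 hr2p.ne']
        apply ciSup_le
        intro k
        rcases le_or_gt 0 ((k : ℝ) * Real.log r2 - Real.log (M k)) with hk | hk
        · have hkC : (k : ℝ) ≤ C * r2 := hkb r2 hr2p k hk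
          have hlog : Real.log r2 - Real.log r1 ≤ (r2 - r1) / r1 := by
            have h5 := Real.log_le_sub_one_of_pos (div_pos hr2p hr1p)
            rw [Real.log_div hr2p.ne' hr1p.ne'] at h5
            have h6 : r2 / r1 - 1 = (r2 - r1) / r1 := by field_simp
            linarith
          have hfr1 : (k : ℝ) * Real.log r1 - Real.log (M k) ≤ omegaM M r1 := by
            rw [homega r1 hr1p.ne']
            exact le_ciSup (hbdd r1 hr1p) k
          have h5 : (k : ℝ) * (Real.log r2 - Real.log r1) ≤
              (k : ℝ) * ((r2 - r1) / r1) :=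
            mul_le_mul_of_nonneg_left hlog (Nat.cast_nonneg k)
          rw [mul_sub] at h5
          have hk2 : (k : ℝ) ≤ 2 * C * r1 := by nlinarith [hkC, hcase, hC0]
          have hrp : 0 ≤ (r2 - r1) / r1 := div_nonneg hrsub hr1p.le
          have h6 : (k : ℝ) * ((r2 - r1) / r1) ≤ 2 * C * (r2 - r1) := by
            calc (k : ℝ) * ((r2 - r1) / r1)
                ≤ (2 * C * r1) * ((r2 - r1) / r1) :=
                  mul_le_mul_of_nonneg_right hk2 hrp
              _ = 2 * C * (r2 - r1) := by field_simp
          linarith [hfr1, h5, h6]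
        · have h7 := hnn r1 hr1p.le
          have h8 : 0 ≤ 2 * C * (r2 - r1) := mul_nonneg (by positivity) hrsub
          linarith
      have h9 : 2 * C * (r2 - r1) ≤ K * (r2 - r1) :=
        mul_le_mul_of_nonneg_right (by rw [hK]; linarith) hrsub
      linarith
    · -- big jump case
      have hr21 : (1 : ℝ) ≤ r2 := le_trans hr11 hr12
      have h1 : omegaM M r2 ≤ K0 * r2 := by
        have hu := hub r2 hr2p
        have h' : |Real.log Q1| * 1 ≤ |Real.log Q1| * r2 :=
          mul_le_mul_of_nonneg_left hr21 (abs_nonneg _)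
        have e : (1 / Q2 + |Real.log Q1|) * r2 = r2 / Q2 + |Real.log Q1| * r2 := by
          ring
        rw [hK0, e]
        linarith
      have h2 : K0 * r2 ≤ 2 * K0 * (r2 - r1) := by
        nlinarith [mul_nonneg hK00.le (by linarith : (0:ℝ) ≤ r2 - 2 * r1)]
      have h3 : 0 ≤ omegaM M r1 := hnn r1 hr1p.le
      have h4 : 2 * K0 * (r2 - r1) ≤ K * (r2 - r1) :=
        mul_le_mul_of_nonneg_right (by rw [hK]; linarith) hrsub
      linarith
  -- one-sided estimate for all 0 ≤ r1 ≤ r2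
  have oneside : ∀ r1 r2 : ℝ, 0 ≤ r1 → r1 ≤ r2 →
      omegaM M r2 - omegaM M r1 ≤ K * (r2 - r1) := by
    intro r1 r2 hr1 hr12
    have hrsub : 0 ≤ r2 - r1 := by linarith
    rcases le_or_gt r2 (M 1) with h | h
    · rw [hzero r1 hr1 (le_trans hr12 h), hzero r2 (le_trans hr1 hr12) h]
      simpa using mul_nonneg hKpos.le hrsub
    · set s := max r1 (M 1) with hs
      have hs1 : M 1 ≤ s := le_max_right _ _
      have hs2 : s ≤ r2 := max_le hr12 h.le
      have heq : omegaM M r1 = omegaM M s := by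
        rcases le_or_gt r1 (M 1) with h' | h'
        · rw [show s = M 1 from max_eq_right h', hzero r1 hr1 h',
            hzero (M 1) hM1pos.le le_rfl]
        · rw [show s = r1 from max_eq_left h'.le]
      have hmain := main s r2 hs1 hs2
      have hKs : K * (r2 - s) ≤ K * (r2 - r1) := by
        apply mul_le_mul_of_nonneg_left _ hKpos.le
        have := le_max_left r1 (M 1)
        linarith [hs ▸ this]
      linarith [heq ▸ hmain]
  -- conclude
  intro r1 r2 hr1 hr2
  rcases le_total r1 r2 with h | h
  · have hm : omegaM M r1 ≤ omegaM M r2 := hmonoO r1 r2 hr1 h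
    rw [abs_of_nonneg (sub_nonneg.mpr hm), abs_of_nonneg (by linarith : (0:ℝ) ≤ r2 - r1)]
    exact oneside r1 r2 hr1 h
  · have hm : omegaM M r2 ≤ omegaM M r1 := hmonoO r2 r1 hr2 h
    rw [abs_of_nonpos (sub_nonpos.mpr hm), abs_of_nonpos (by linarith : r2 - r1 ≤ 0)]
    have := oneside r2 r1 hr2 h
    linarith
end

section
/- Let Γ ⊂ ℝ^n be an open convex cone with apex at the origin, and h : closure(Γ) → ℝ a continuous convex positively homogeneous function of degree 1. Then for every ε > 0 there exists A_ε > 0 such that for all y_1, y_2 ∈ Γ with ‖y_2 − y_1‖ ≤ 1, one has |h(y_2) − h(y_1)| ≤ ε‖y_1‖ + ε‖y_2‖ + A_ε. -/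
theorem convex_homogeneous_almost_lipschitz (n : ℕ)
    (Γ : Set (EuclideanSpace ℝ (Fin n))) (hΓopen : IsOpen Γ) (hΓconv : Convex ℝ Γ)
    (hΓcone : ∀ y ∈ Γ, ∀ t : ℝ, 0 < t → t • y ∈ Γ)
    (h : EuclideanSpace ℝ (Fin n) → ℝ)
    (hcont : ContinuousOn h (closure Γ))
    (hconvex : ConvexOn ℝ (closure Γ) h)
    (hhom : ∀ y ∈ closure Γ, ∀ t : ℝ, 0 ≤ t → h (t • y) = t * h y) :
    ∀ ε : ℝ, 0 < ε → ∃ A : ℝ, 0 < A ∧ ∀ y1 ∈ Γ, ∀ y2 ∈ Γ, ‖y2 - y1‖ ≤ 1 →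
      |h y2 - h y1| ≤ ε * ‖y1‖ + ε * ‖y2‖ + A := by
  intro ε hε
  set K := closure Γ ∩ Metric.closedBall (0 : EuclideanSpace ℝ (Fin n)) 1 with hKdef
  have hK : IsCompact K := (isCompact_closedBall 0 1).inter_left isClosed_closure
  have hcK : ContinuousOn h K := hcont.mono Set.inter_subset_left
  have hu := hK.uniformContinuousOn_of_continuous hcK
  rw [Metric.uniformContinuousOn_iff] at hu
  obtain ⟨δ, hδ, hud⟩ := hu ε hε
  refine ⟨ε * (2 / δ), by positivity, ?_⟩
  intro y1 hy1 y2 hy2 hd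
  set s : ℝ := ‖y1‖ + ‖y2‖ + 2 / δ with hsdef
  have h2δ : 0 < 2 / δ := by positivity
  have hs : 0 < s := by positivity
  have hmem : ∀ y ∈ Γ, ‖y‖ ≤ s → s⁻¹ • y ∈ K := by
    intro y hy hny
    refine ⟨subset_closure (hΓcone y hy s⁻¹ (by positivity)), ?_⟩
    rw [Metric.mem_closedBall, dist_zero_right, norm_smul, norm_inv, Real.norm_eq_abs,
      abs_of_pos hs]
    rw [inv_mul_le_iff₀ hs, mul_one]
    exact hny
  have h1 : s⁻¹ • y1 ∈ K := hmem y1 hy1 (by rw [hsdef]; linarith [norm_nonneg y2])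
  have h2 : s⁻¹ • y2 ∈ K := hmem y2 hy2 (by rw [hsdef]; linarith [norm_nonneg y1])
  have hdist : dist (s⁻¹ • y2) (s⁻¹ • y1) < δ := by
    rw [dist_eq_norm, ← smul_sub, norm_smul, norm_inv, Real.norm_eq_abs, abs_of_pos hs]
    have hsd : 2 / δ ≤ s := by rw [hsdef]; linarith [norm_nonneg y1, norm_nonneg y2]
    have : s⁻¹ ≤ δ / 2 := by
      rw [inv_le_comm₀ hs (by positivity)]
      calc (δ/2)⁻¹ = 2 / δ := by field_simp
        _ ≤ s := hsd
    calc s⁻¹ * ‖y2 - y1‖ ≤ (δ/2) * 1 := by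
          apply mul_le_mul this hd (norm_nonneg _) (by positivity)
      _ < δ := by linarith
  have key := hud _ h2 _ h1 hdist
  rw [Real.dist_eq, hhom y2 (subset_closure hy2) s⁻¹ (by positivity),
    hhom y1 (subset_closure hy1) s⁻¹ (by positivity), ← mul_sub, abs_mul,
    abs_of_pos (inv_pos.mpr hs)] at key
  have : |h y2 - h y1| ≤ s * ε := by
    rw [← inv_mul_le_iff₀ hs] at *
    · linarith
  calc |h y2 - h y1| ≤ s * ε := this
    _ = ε * ‖y1‖ + ε * ‖y2‖ + ε * (2 / δ) := by ring
end

section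
/- Let C be an open convex acute cone in ℝ^n with apex at the origin and b a continuous convex positively homogeneous function of degree 1 on the closure of C. Define U(b,C) = {ξ ∈ ℝ^n : −⟨ξ, y⟩ ≤ b(y) for all y ∈ C} and V(b,C) = {ξ ∈ ℝ^n : −⟨ξ, y⟩ < b(y) for all y ∈ closure(C) \ {0}}. Then V(b,C) is the interior of U(b,C) and the closure of V(b,C) equals U(b,C). -/
open RealInnerProductSpace

theorem interior_closure_U_V (n : ℕ) (C : Set (EuclideanSpace ℝ (Fin n)))
    (hCopen : IsOpen C) (hCconv : Convex ℝ C) (hCne : C.Nonempty)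
    (hCcone : ∀ y ∈ C, ∀ t : ℝ, 0 < t → t • y ∈ C)
    (hacute : ∀ y, y ∈ closure C → -y ∈ closure C → y = 0)
    (b : EuclideanSpace ℝ (Fin n) → ℝ)
    (hcont : ContinuousOn b (closure C)) (hconvex : ConvexOn ℝ (closure C) b)
    (hhom : ∀ y ∈ closure C, ∀ t : ℝ, 0 ≤ t → b (t • y) = t * b y) :
    {ξ : EuclideanSpace ℝ (Fin n) | ∀ y ∈ closure C \ {0}, -⟪ξ, y⟫ < b y} =
        interior {ξ : EuclideanSpace ℝ (Fin n) | ∀ y ∈ C, -⟪ξ, y⟫ ≤ b y} ∧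
      closure {ξ : EuclideanSpace ℝ (Fin n) | ∀ y ∈ closure C \ {0}, -⟪ξ, y⟫ < b y} =
        {ξ : EuclideanSpace ℝ (Fin n) | ∀ y ∈ C, -⟪ξ, y⟫ ≤ b y} := by
  classical
  obtain ⟨y₀, hy₀⟩ := hCne
  set V := {ξ : EuclideanSpace ℝ (Fin n) | ∀ y ∈ closure C \ {0}, -⟪ξ, y⟫ < b y} with hVdef
  set U := {ξ : EuclideanSpace ℝ (Fin n) | ∀ y ∈ C, -⟪ξ, y⟫ ≤ b y} with hUdef
  -- 0 is in the closure of C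
  have h0cl : (0 : EuclideanSpace ℝ (Fin n)) ∈ closure C := by
    have hten : Filter.Tendsto (fun t : ℝ => t • y₀) (nhdsWithin 0 (Set.Ioi 0))
        (nhds (0 : EuclideanSpace ℝ (Fin n))) := by
      have h := ((continuous_id.smul continuous_const).tendsto (0 : ℝ) :
        Filter.Tendsto (fun t : ℝ => t • y₀) (nhds 0) (nhds ((0:ℝ) • y₀)))
      have h' : Filter.Tendsto (fun t : ℝ => t • y₀) (nhds 0) (nhds ((0:ℝ) • y₀)) := h
      rw [zero_smul] at h'
      exact h'.mono_left nhdsWithin_le_nhds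
    exact mem_closure_of_tendsto hten
      (eventually_mem_nhdsWithin.mono fun t ht => hCcone y₀ hy₀ t ht)
  have hb0 : b 0 = 0 := by
    have := hhom y₀ (subset_closure hy₀) 0 le_rfl
    simpa using this
  -- closure C is stable under nonnegative scaling
  have hclsmul : ∀ y ∈ closure C, ∀ t : ℝ, 0 ≤ t → t • y ∈ closure C := by
    intro y hy t ht
    rcases eq_or_lt_of_le ht with h | h
    · simpa [← h] using h0cl
    · have h1 : t • y ∈ (fun z : EuclideanSpace ℝ (Fin n) => t • z) '' closure C :=
        Set.mem_image_of_mem _ hy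
      have h2 : (fun z : EuclideanSpace ℝ (Fin n) => t • z) '' closure C ⊆
          closure ((fun z : EuclideanSpace ℝ (Fin n) => t • z) '' C) :=
        image_closure_subset_closure_image (continuous_const_smul t)
      have h3 : (fun z : EuclideanSpace ℝ (Fin n) => t • z) '' C ⊆ C := by
        rintro _ ⟨z, hz, rfl⟩; exact hCcone z hz t h
      exact closure_mono h3 (h2 h1)
  -- closure C is stable under addition
  have hcladd : ∀ a ∈ closure C, ∀ c ∈ closure C, a + c ∈ closure C := by
    intro a ha c hc
    have hmid : (1/2 : ℝ) • a + (1/2 : ℝ) • c ∈ closure C :=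
      hCconv.closure ha hc (by norm_num) (by norm_num) (by norm_num)
    have := hclsmul _ hmid 2 (by norm_num)
    have h2 : (2:ℝ) • ((1/2 : ℝ) • a + (1/2 : ℝ) • c) = a + c := by
      rw [smul_add, smul_smul, smul_smul]; norm_num
    rwa [h2] at this
  -- membership in U extends to the closure
  have hUcl : ∀ ξ ∈ U, ∀ y ∈ closure C, 0 ≤ b y + ⟪ξ, y⟫ := by
    intro ξ hξ y hy
    have hcw : ContinuousWithinAt (fun z => b z + ⟪ξ, z⟫) (closure C) y :=
      (hcont y hy).add ((continuous_const.inner continuous_id).continuousWithinAt)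
    have hten : Filter.Tendsto (fun z => b z + ⟪ξ, z⟫) (nhdsWithin y C)
        (nhds (b y + ⟪ξ, y⟫)) := hcw.mono subset_closure
    have hne : (nhdsWithin y C).NeBot := mem_closure_iff_nhdsWithin_neBot.mp hy
    refine ge_of_tendsto hten ?_
    refine eventually_mem_nhdsWithin.mono fun z hz => ?_
    have := hξ z hz
    linarith
  have hVU : V ⊆ U := by
    intro ξ hξ y hyC
    by_cases hy0 : y = 0
    · simp [hy0, hb0]
    · exact (hξ y ⟨subset_closure hyC, hy0⟩).le
  have hUclosed : IsClosed U := by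
    have hrw : U = ⋂ y ∈ C, {ξ : EuclideanSpace ℝ (Fin n) | -⟪ξ, y⟫ ≤ b y} := by
      ext ξ; simp [hUdef, Set.mem_iInter]
    rw [hrw]
    refine isClosed_biInter fun y hy => isClosed_le ?_ continuous_const
    exact (continuous_id.inner continuous_const).neg
  -- unit-sphere slice of the closed cone
  set S := closure C ∩ Metric.sphere (0 : EuclideanSpace ℝ (Fin n)) 1 with hSdef
  have hSsub : S ⊆ closure C \ {0} := by
    rintro y ⟨hy1, hy2⟩
    refine ⟨hy1, ?_⟩
    have : ‖y‖ = 1 := mem_sphere_zero_iff_norm.mp hy2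
    intro h; rw [h] at this; simp at this
  have hnorm_mem : ∀ y ∈ closure C \ {0}, ‖y‖⁻¹ • y ∈ S := by
    rintro y ⟨hy1, hy2⟩
    have hn : ‖y‖ ≠ 0 := norm_ne_zero_iff.mpr hy2
    refine ⟨hclsmul y hy1 _ (inv_nonneg.mpr (norm_nonneg y)), ?_⟩
    rw [mem_sphere_zero_iff_norm, norm_smul, norm_inv, norm_norm, inv_mul_cancel₀ hn]
  have hdecomp : ∀ y ∈ closure C \ {0}, ∀ ξ : EuclideanSpace ℝ (Fin n),
      b y + ⟪ξ, y⟫ = ‖y‖ * (b (‖y‖⁻¹ • y) + ⟪ξ, ‖y‖⁻¹ • y⟫) := by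
    rintro y hy ξ
    have hn : ‖y‖ ≠ 0 := norm_ne_zero_iff.mpr hy.2
    have h1 : b (‖y‖⁻¹ • y) = ‖y‖⁻¹ * b y :=
      hhom y hy.1 _ (inv_nonneg.mpr (norm_nonneg y))
    have h2 : ⟪ξ, ‖y‖⁻¹ • y⟫ = ‖y‖⁻¹ * ⟪ξ, y⟫ := real_inner_smul_right ξ y _
    rw [h1, h2]
    field_simp
  -- V is open
  have hVopen : IsOpen V := by
    rw [Metric.isOpen_iff]
    intro ξ hξ
    by_cases hS : S.Nonempty
    · have hScomp : IsCompact S :=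
        (isCompact_sphere (0 : EuclideanSpace ℝ (Fin n)) 1).inter_left isClosed_closure
      have hcontS : ContinuousOn (fun y => b y + ⟪ξ, y⟫) S :=
        (hcont.mono Set.inter_subset_left).add
          (continuous_const.inner continuous_id).continuousOn
      obtain ⟨z₀, hz₀S, hz₀min⟩ := hScomp.exists_isMinOn hS hcontS
      set m := b z₀ + ⟪ξ, z₀⟫ with hmdef
      have hm : 0 < m := by
        have := hξ z₀ (hSsub hz₀S)
        simp only [hmdef]; linarith
      refine ⟨m, hm, ?_⟩
      intro ξ' hξ' y hy
      have hzS := hnorm_mem y hy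
      have h1 : m ≤ b (‖y‖⁻¹ • y) + ⟪ξ, ‖y‖⁻¹ • y⟫ := hz₀min hzS
      have hnz : ‖(‖y‖⁻¹ • y)‖ = 1 := mem_sphere_zero_iff_norm.mp hzS.2
      have h2 : |⟪ξ' - ξ, ‖y‖⁻¹ • y⟫| ≤ ‖ξ' - ξ‖ := by
        have := abs_real_inner_le_norm (ξ' - ξ) (‖y‖⁻¹ • y)
        rwa [hnz, mul_one] at this
      have hd : ‖ξ' - ξ‖ < m := by
        rw [← dist_eq_norm]; exact Metric.mem_ball.mp hξ'
      have h3 : ⟪ξ', ‖y‖⁻¹ • y⟫ = ⟪ξ, ‖y‖⁻¹ • y⟫ + ⟪ξ' - ξ, ‖y‖⁻¹ • y⟫ := by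
        rw [inner_sub_left]; ring
      have key : 0 < b (‖y‖⁻¹ • y) + ⟪ξ', ‖y‖⁻¹ • y⟫ := by
        have habs := abs_le.mp h2
        rw [h3]; linarith
      have hdec := hdecomp y hy ξ'
      have hnpos : (0:ℝ) < ‖y‖ := norm_pos_iff.mpr hy.2
      have := mul_pos hnpos key
      linarith
    · refine ⟨1, one_pos, ?_⟩
      intro ξ' _ y hy
      exact absurd ⟨_, hnorm_mem y hy⟩ hS
  -- interior U ⊆ V
  have hintUV : interior U ⊆ V := by
    intro ξ hξ y hy
    obtain ⟨ε, hε, hball⟩ := Metric.mem_nhds_iff.mp (mem_interior_iff_mem_nhds.mp hξ)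
    have hnpos : (0:ℝ) < ‖y‖ := norm_pos_iff.mpr hy.2
    set c := ε / (2 * ‖y‖) with hcdef
    have hc : 0 < c := by positivity
    have hmem : ξ - c • y ∈ U := by
      apply hball
      rw [Metric.mem_ball, dist_eq_norm]
      have : ξ - c • y - ξ = -(c • y) := by abel
      rw [this, norm_neg, norm_smul, Real.norm_eq_abs, abs_of_pos hc, hcdef]
      have heq : ε / (2 * ‖y‖) * ‖y‖ = ε / 2 := by field_simp
      rw [heq]
      linarith
    have h1 : 0 ≤ b y + ⟪ξ - c • y, y⟫ := hUcl _ hmem y hy.1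
    have h2 : ⟪ξ - c • y, y⟫ = ⟪ξ, y⟫ - c * ⟪y, y⟫ := by
      rw [inner_sub_left, real_inner_smul_left]
    have h3 : ⟪y, y⟫ = ‖y‖ ^ 2 := real_inner_self_eq_norm_sq y
    have h4 : 0 < c * ‖y‖ ^ 2 := by positivity
    rw [h2, h3] at h1
    linarith
  -- existence of a strictly positive functional on the closed cone
  have hηex : ∃ η : EuclideanSpace ℝ (Fin n), ∀ y ∈ closure C \ {0}, 0 < ⟪η, y⟫ := by
    set K : ConvexCone ℝ (EuclideanSpace ℝ (Fin n)) :=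
      { carrier := closure C
        smul_mem' := fun c hc y hy => hclsmul y hy c hc.le
        add_mem' := fun a ha c hc => hcladd a ha c hc } with hKdef
    set D := (ProperCone.innerDual (closure C) : Set (EuclideanSpace ℝ (Fin n))) with hDdef
    have h0D : (0 : EuclideanSpace ℝ (Fin n)) ∈ D := by
      rw [hDdef, SetLike.mem_coe, ProperCone.mem_innerDual]; intro x _
      rw [inner_zero_right]
    have hDconv : Convex ℝ D := (ProperCone.innerDual (closure C)).convex
    have hDint : (interior D).Nonempty := by
      by_contra hempty
      rw [Set.not_nonempty_iff_eq_empty] at hempty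
      have hspan : affineSpan ℝ D ≠ ⊤ := by
        intro htop
        rw [← hDconv.interior_nonempty_iff_affineSpan_eq_top] at htop
        rw [hempty] at htop
        exact Set.not_nonempty_empty htop
      have hsub : Submodule.span ℝ D ≠ ⊤ := by
        intro htop
        apply hspan
        rw [AffineSubspace.affineSpan_eq_top_iff_vectorSpan_eq_top_of_nonempty ℝ (EuclideanSpace ℝ (Fin n)) (EuclideanSpace ℝ (Fin n)) ⟨0, h0D⟩]
        rw [eq_top_iff, ← htop, Submodule.span_le]
        intro y hy
        have := vsub_mem_vectorSpan ℝ hy h0D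
        simpa using this
      obtain ⟨v, hvmem, hvne⟩ : ∃ v ∈ (Submodule.span ℝ D)ᗮ, v ≠ 0 := by
        rw [← Submodule.ne_bot_iff]
        intro hbot
        exact hsub (Submodule.orthogonal_eq_bot_iff.mp hbot)
      have hperp : ∀ η ∈ D, ⟪η, v⟫ = 0 := fun η hη =>
        (Submodule.mem_orthogonal _ v).mp hvmem η (Submodule.subset_span hη)
      have hbidual : (ProperCone.innerDual (ProperCone.innerDual (closure C) : Set (EuclideanSpace ℝ (Fin n))) :
          Set (EuclideanSpace ℝ (Fin n))) = closure C := by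
        let P : ProperCone ℝ (EuclideanSpace ℝ (Fin n)) :=
          { carrier := closure C
            add_mem' := fun ha hc => hcladd _ ha _ hc
            zero_mem' := h0cl
            smul_mem' := fun c y hy => hclsmul y hy c c.2
            isClosed' := isClosed_closure }
        exact congrArg SetLike.coe (ProperCone.innerDual_innerDual P)
      have hv : v ∈ closure C := by
        have hmem : v ∈ (ProperCone.innerDual (ProperCone.innerDual (closure C) : Set (EuclideanSpace ℝ (Fin n))) :
            Set (EuclideanSpace ℝ (Fin n))) := by
          rw [SetLike.mem_coe, ProperCone.mem_innerDual]
          intro η hη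
          exact le_of_eq (hperp η hη).symm
        rw [hbidual] at hmem
        exact hmem
      have hnv : -v ∈ closure C := by
        have hmem : -v ∈ (ProperCone.innerDual (ProperCone.innerDual (closure C) : Set (EuclideanSpace ℝ (Fin n))) :
            Set (EuclideanSpace ℝ (Fin n))) := by
          rw [SetLike.mem_coe, ProperCone.mem_innerDual]
          intro η hη
          rw [inner_neg_right, hperp η hη, neg_zero]
        rw [hbidual] at hmem
        exact hmem
      exact hvne (hacute v hv hnv)
    obtain ⟨η, hηint⟩ := hDint
    refine ⟨η, ?_⟩
    intro y hy
    obtain ⟨ε, hε, hball⟩ := Metric.mem_nhds_iff.mp (mem_interior_iff_mem_nhds.mp hηint)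
    have hnpos : (0:ℝ) < ‖y‖ := norm_pos_iff.mpr hy.2
    set c := ε / (2 * ‖y‖) with hcdef
    have hc : 0 < c := by positivity
    have hmem : η - c • y ∈ D := by
      apply hball
      rw [Metric.mem_ball, dist_eq_norm]
      have h' : η - c • y - η = -(c • y) := by abel
      rw [h', norm_neg, norm_smul, Real.norm_eq_abs, abs_of_pos hc, hcdef]
      have heq : ε / (2 * ‖y‖) * ‖y‖ = ε / 2 := by field_simp
      rw [heq]
      linarith
    have h1 : 0 ≤ ⟪y, η - c • y⟫ := hmem hy.1
    have h2 : ⟪y, η - c • y⟫ = ⟪y, η⟫ - c * ⟪y, y⟫ := by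
      rw [inner_sub_right, real_inner_smul_right]
    have h3 : ⟪y, y⟫ = ‖y‖ ^ 2 := real_inner_self_eq_norm_sq y
    have h4 : 0 < c * ‖y‖ ^ 2 := by positivity
    rw [h2, h3] at h1
    rw [real_inner_comm]
    linarith
  -- U ⊆ closure V
  have hUclV : U ⊆ closure V := by
    obtain ⟨η, hη⟩ := hηex
    intro ξ hξ
    have hten : Filter.Tendsto (fun t : ℝ => ξ + t • η) (nhdsWithin 0 (Set.Ioi 0))
        (nhds ξ) := by
      have h := ((continuous_const.add (continuous_id.smul continuous_const)).tendsto (0 : ℝ) :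
        Filter.Tendsto (fun t : ℝ => ξ + t • η) (nhds 0) (nhds (ξ + (0:ℝ) • η)))
      have h' : Filter.Tendsto (fun t : ℝ => ξ + t • η) (nhds 0) (nhds (ξ + (0:ℝ) • η)) := h
      rw [zero_smul, add_zero] at h'
      exact h'.mono_left nhdsWithin_le_nhds
    refine mem_closure_of_tendsto hten ?_
    refine eventually_mem_nhdsWithin.mono fun t ht => ?_
    intro y hy
    have h1 : 0 ≤ b y + ⟪ξ, y⟫ := hUcl ξ hξ y hy.1
    have h2 : 0 < ⟪η, y⟫ := hη y hy
    have h3 : ⟪ξ + t • η, y⟫ = ⟪ξ, y⟫ + t * ⟪η, y⟫ := by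
      rw [inner_add_left, real_inner_smul_left]
    have ht' : (0:ℝ) < t := ht
    have := mul_pos ht' h2
    rw [h3] at *
    linarith [mul_pos ht' h2]
  constructor
  · exact subset_antisymm (interior_maximal hVU hVopen) hintUV
  · exact subset_antisymm (closure_minimal hVU hUclosed) hUclV
end

section
/- Let g : ℂ^k × Ω → ℂ be holomorphic (Ω a domain in ℂ^m) with g(z', 0, ζ) = 0 for all z' ∈ ℂ^{k−1}, ζ ∈ Ω, and let ψ(z', z_k, ζ) = g(z', z_k, ζ)/z_k. Then for |z_k| ≤ 1: |ψ(z', z_k, ζ)|² ≤ (1/π) ∫_{|t| ≤ 2} |g(z', t, ζ)|² dλ₁(t), where λ₁ is Lebesgue measure on ℂ. -/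
open MeasureTheory Metric Real Set

lemma circle_avg (h : ℂ → ℂ) (hd : Differentiable ℂ h) (c : ℂ) {ρ : ℝ} (hρ : 0 < ρ) :
    2 * Real.pi * ‖h c‖ ≤ ∫ θ in (0:ℝ)..(2*Real.pi), ‖h (circleMap c ρ θ)‖ := by
  have key : (∮ z in C(c, ρ), (z - c)⁻¹ • h z) = (2 * Real.pi * Complex.I : ℂ) • h c :=
    (hd.diffContOnCl).circleIntegral_sub_inv_smul (mem_ball_self hρ)
  have h1 : ‖(2 * Real.pi * Complex.I : ℂ) • h c‖ = 2 * Real.pi * ‖h c‖ := by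
    simp [norm_smul, abs_of_pos Real.pi_pos]
  have h2 : ‖∮ z in C(c, ρ), (z - c)⁻¹ • h z‖ ≤ ∫ θ in (0:ℝ)..(2*Real.pi), ‖h (circleMap c ρ θ)‖ := by
    rw [circleIntegral]
    refine (intervalIntegral.norm_integral_le_integral_norm (by positivity)).trans_eq ?_
    refine intervalIntegral.integral_congr fun θ _ => ?_
    rw [deriv_circleMap, circleMap_sub_center, norm_smul, norm_smul]
    simp [abs_of_pos hρ]
    field_simp
  calc 2 * Real.pi * ‖h c‖ = ‖(2 * Real.pi * Complex.I : ℂ) • h c‖ := h1.symm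
    _ = ‖∮ z in C(c, ρ), (z - c)⁻¹ • h z‖ := by rw [key]
    _ ≤ _ := h2


lemma polar_symm_circleMap (x θ : ℝ) : Complex.polarCoord.symm (x, θ) = circleMap 0 x θ := by
  simp [circleMap, Complex.exp_mul_I]

set_option maxHeartbeats 1000000 in
lemma area_submean (h : ℂ → ℂ) (hd : Differentiable ℂ h) (c : ℂ)
    (ha : ∀ ρ : ℝ, 0 < ρ → 2 * Real.pi * ‖h c‖ ≤ ∫ θ in (0:ℝ)..(2*Real.pi), ‖h (circleMap c ρ θ)‖) :
    Real.pi * ‖h c‖ ≤ ∫ t in ball c 1, ‖h t‖ := by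
  set q : ℂ → ℝ := fun t => ‖h (c + t)‖ with hq
  have hqc : Continuous q := (hd.continuous.comp (continuous_const.add continuous_id)).norm
  -- translation
  have htrans : ∫ t in ball c 1, ‖h t‖ = ∫ t in ball (0:ℂ) 1, q t := by
    rw [show ball (0:ℂ) 1 = (fun t => c + t) ⁻¹' (ball c 1) by
      ext t; simp [mem_ball, dist_eq_norm]]
    exact ((measurePreserving_add_left volume c).setIntegral_preimage_emb
      (MeasurableEquiv.addLeft c).measurableEmbedding _ _).symm
  set S : Set (ℝ × ℝ) := Ioo (0:ℝ) 1 ×ˢ Ioo (-Real.pi) Real.pi with hS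
  have htarget : polarCoord.target = Ioi (0:ℝ) ×ˢ Ioo (-Real.pi) Real.pi := rfl
  have hStarget : S ⊆ polarCoord.target := by
    rw [htarget]
    exact Set.prod_mono Ioo_subset_Ioi_self subset_rfl
  have hmemball : ∀ p ∈ polarCoord.target,
      (Complex.polarCoord.symm p ∈ ball (0:ℂ) 1 ↔ p ∈ S) := by
    intro p hp
    rw [htarget] at hp
    rw [mem_ball, dist_eq_norm, sub_zero, Complex.norm_polarCoord_symm,
      abs_of_pos hp.1]
    constructor
    · exact fun hlt => ⟨⟨hp.1, hlt⟩, hp.2⟩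
    · exact fun hmem => hmem.1.2
  have hpolar : ∫ t in ball (0:ℂ) 1, q t = ∫ p in S, p.1 * q (Complex.polarCoord.symm p) := by
    have h0 := Complex.integral_comp_polarCoord_symm (Set.indicator (ball (0:ℂ) 1) q)
    rw [integral_indicator measurableSet_ball] at h0
    rw [← h0]
    have hcongr : (∫ p in polarCoord.target,
        p.1 • Set.indicator (ball (0:ℂ) 1) q (Complex.polarCoord.symm p))
        = ∫ p in polarCoord.target,
          Set.indicator S (fun p : ℝ × ℝ => p.1 * q (Complex.polarCoord.symm p)) p := by
      refine setIntegral_congr_fun polarCoord.open_target.measurableSet (fun p hp => ?_)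
      by_cases hmem : p ∈ S
      · rw [Set.indicator_of_mem hmem, Set.indicator_of_mem ((hmemball p hp).mpr hmem)]
        rfl
      · rw [Set.indicator_of_notMem hmem,
          Set.indicator_of_notMem (fun hb => hmem ((hmemball p hp).mp hb)), smul_zero]
    rw [hcongr, setIntegral_indicator (measurableSet_Ioo.prod measurableSet_Ioo),
      Set.inter_eq_self_of_subset_right hStarget]
  have hsymm : Continuous (fun p : ℝ × ℝ => (Complex.polarCoord.symm p : ℂ)) := by
    simp only [Complex.polarCoord_symm_apply]
    continuity
  have hFp : Continuous (fun p : ℝ × ℝ => p.1 * q (Complex.polarCoord.symm p)) :=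
    continuous_fst.mul (hqc.comp hsymm)
  have hint : IntegrableOn (fun p : ℝ × ℝ => p.1 * q (Complex.polarCoord.symm p)) S := by
    refine (hFp.continuousOn.integrableOn_compact
      ((isCompact_Icc (a := (0:ℝ)) (b := 1)).prod
        (isCompact_Icc (a := -Real.pi) (b := Real.pi)))).mono_set ?_
    exact Set.prod_mono Ioo_subset_Icc_self Ioo_subset_Icc_self
  -- inner integral identification
  have hinner : ∀ x : ℝ, 0 < x → ∀ y : ℝ,
      x * q (Complex.polarCoord.symm (x, y)) = x * ‖h (circleMap c x y)‖ := by
    intro x hx y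
    have : Complex.polarCoord.symm (x, y) = circleMap 0 x y := polar_symm_circleMap x y
    rw [this]
    simp only [hq]
    congr 2
    simp [circleMap]
  have hcirc : ∀ x : ℝ, 0 < x →
      (∫ y in Ioo (-Real.pi) Real.pi, ‖h (circleMap c x y)‖)
        = ∫ θ in (0:ℝ)..(2*Real.pi), ‖h (circleMap c x θ)‖ := by
    intro x hx
    have hper : Function.Periodic (fun θ => ‖h (circleMap c x θ)‖) (2*Real.pi) :=
      fun θ => by simp [periodic_circleMap c x θ]
    have hshift := hper.intervalIntegral_add_eq (-Real.pi) 0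
    rw [show -Real.pi + 2*Real.pi = Real.pi by ring, zero_add] at hshift
    rw [← hshift, intervalIntegral.integral_of_le (by linarith [Real.pi_pos]),
      integral_Ioc_eq_integral_Ioo]
  -- Fubini
  have hintp : Integrable (fun p : ℝ × ℝ => p.1 * q (Complex.polarCoord.symm p))
      ((volume.restrict (Ioo (0:ℝ) 1)).prod (volume.restrict (Ioo (-Real.pi) Real.pi))) := by
    rw [Measure.prod_restrict, ← Measure.volume_eq_prod]
    exact hint
  have hfub : (∫ p in S, p.1 * q (Complex.polarCoord.symm p))
      = ∫ x in Ioo (0:ℝ) 1, ∫ y in Ioo (-Real.pi) Real.pi,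
          x * q (Complex.polarCoord.symm (x, y)) := by
    rw [hS, Measure.volume_eq_prod, setIntegral_prod _ ?_]
    rw [IntegrableOn, ← Measure.prod_restrict]
    exact hintp
  have hmarg : IntegrableOn (fun x : ℝ => ∫ y in Ioo (-Real.pi) Real.pi,
      x * q (Complex.polarCoord.symm (x, y))) (Ioo (0:ℝ) 1) :=
    hintp.integral_prod_left
  have hlow : IntegrableOn (fun x : ℝ => 2 * Real.pi * ‖h c‖ * x) (Ioo (0:ℝ) 1) :=
    ((continuous_const.mul continuous_id).continuousOn.integrableOn_compact
      (isCompact_Icc (a := (0:ℝ)) (b := 1))).mono_set Ioo_subset_Icc_self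
  have hmono : (∫ x in Ioo (0:ℝ) 1, 2 * Real.pi * ‖h c‖ * x)
      ≤ ∫ x in Ioo (0:ℝ) 1, ∫ y in Ioo (-Real.pi) Real.pi,
          x * q (Complex.polarCoord.symm (x, y)) := by
    refine setIntegral_mono_on hlow hmarg measurableSet_Ioo (fun x hx => ?_)
    have hx0 : 0 < x := hx.1
    have : (∫ y in Ioo (-Real.pi) Real.pi, x * q (Complex.polarCoord.symm (x, y)))
        = x * ∫ θ in (0:ℝ)..(2*Real.pi), ‖h (circleMap c x θ)‖ := by
      rw [show (fun y => x * q (Complex.polarCoord.symm (x, y)))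
          = fun y => x * ‖h (circleMap c x y)‖ from funext (hinner x hx0), integral_const_mul,
        hcirc x hx0]
    rw [this, mul_comm (2 * Real.pi * ‖h c‖) x]
    exact mul_le_mul_of_nonneg_left (ha x hx0) hx0.le
  have hval : (∫ x in Ioo (0:ℝ) 1, 2 * Real.pi * ‖h c‖ * x) = Real.pi * ‖h c‖ := by
    have hhalf : (∫ x in Ioo (0:ℝ) 1, x) = 1/2 := by
      rw [← integral_Ioc_eq_integral_Ioo, ← intervalIntegral.integral_of_le zero_le_one]
      simp
    rw [integral_const_mul, hhalf]
    ring
  rw [htrans, hpolar, hfub, ← hval]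
  exact hmono
lemma slice_diff {k m : ℕ} {Ω : Set (Fin m → ℂ)} (hΩ : IsOpen Ω)
    {f : (Fin k → ℂ) → ℂ → (Fin m → ℂ) → ℂ}
    (hf : DifferentiableOn ℂ (fun p : (Fin k → ℂ) × ℂ × (Fin m → ℂ) => f p.1 p.2.1 p.2.2)
      (Set.univ ×ˢ Set.univ ×ˢ Ω)) (z' : Fin k → ℂ) {ζ : Fin m → ℂ} (hζ : ζ ∈ Ω) :
    Differentiable ℂ (fun t : ℂ => f z' t ζ) := by
  intro t
  have hopen : IsOpen ((Set.univ ×ˢ Set.univ ×ˢ Ω) : Set ((Fin k → ℂ) × ℂ × (Fin m → ℂ))) :=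
    isOpen_univ.prod (isOpen_univ.prod hΩ)
  have hmem : ((z', (t, ζ)) : (Fin k → ℂ) × ℂ × (Fin m → ℂ)) ∈
      Set.univ ×ˢ Set.univ ×ˢ Ω := ⟨trivial, trivial, hζ⟩
  have h1 : DifferentiableAt ℂ
      (fun p : (Fin k → ℂ) × ℂ × (Fin m → ℂ) => f p.1 p.2.1 p.2.2) (z', (t, ζ)) :=
    hf.differentiableAt (hopen.mem_nhds hmem)
  have h2 : DifferentiableAt ℂ
      (fun s : ℂ => ((z', (s, ζ)) : (Fin k → ℂ) × ℂ × (Fin m → ℂ))) t :=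
    (differentiableAt_const _).prodMk (differentiableAt_id.prodMk (differentiableAt_const _))
  exact h1.comp t h2

theorem quotient_square_integral_estimate (k m : ℕ) (Ω : Set (Fin m → ℂ)) (hΩopen : IsOpen Ω)
    (g : (Fin k → ℂ) → ℂ → (Fin m → ℂ) → ℂ)
    (hg : DifferentiableOn ℂ (fun p : (Fin k → ℂ) × ℂ × (Fin m → ℂ) => g p.1 p.2.1 p.2.2)
      (Set.univ ×ˢ Set.univ ×ˢ Ω))
    (hg0 : ∀ z', ∀ ζ ∈ Ω, g z' 0 ζ = 0)
    (ψ : (Fin k → ℂ) → ℂ → (Fin m → ℂ) → ℂ)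
    (hψ : DifferentiableOn ℂ (fun p : (Fin k → ℂ) × ℂ × (Fin m → ℂ) => ψ p.1 p.2.1 p.2.2)
      (Set.univ ×ˢ Set.univ ×ˢ Ω))
    (hψeq : ∀ z', ∀ zk : ℂ, zk ≠ 0 → ∀ ζ ∈ Ω, ψ z' zk ζ = g z' zk ζ / zk) :
    ∀ z', ∀ ζ ∈ Ω, ∀ zk : ℂ, ‖zk‖ ≤ 1 →
      ‖ψ z' zk ζ‖ ^ 2 ≤ (1 / Real.pi) * ∫ t in {t : ℂ | ‖t‖ ≤ 2}, ‖g z' t ζ‖ ^ 2 := by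
  intro z' ζ hζ zk hzk
  set G : ℂ → ℂ := fun t => g z' t ζ with hGdef
  set F : ℂ → ℂ := fun t => ψ z' t ζ with hFdef
  have hGd : Differentiable ℂ G := slice_diff hΩopen hg z' hζ
  have hFd : Differentiable ℂ F := slice_diff hΩopen hψ z' hζ
  -- maximum of ‖F‖ on the unit sphere
  obtain ⟨η, hη, hmax⟩ := (isCompact_sphere (0:ℂ) 1).exists_isMaxOn
    (NormedSpace.sphere_nonempty.mpr zero_le_one) (hFd.continuous.norm.continuousOn)
  have hη1 : ‖η‖ = 1 := mem_sphere_zero_iff_norm.mp hη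
  have hη0 : η ≠ 0 := by intro h0; rw [h0] at hη1; simp at hη1
  -- maximum principle
  have hstep1 : ‖F zk‖ ≤ ‖F η‖ := by
    refine Complex.norm_le_of_forall_mem_frontier_norm_le (U := ball (0:ℂ) 1) isBounded_ball hFd.diffContOnCl
      (fun w hw => ?_) (z := zk) ?_
    · rw [frontier_ball (0:ℂ) one_ne_zero] at hw
      exact hmax hw
    · rw [closure_ball (0:ℂ) one_ne_zero]
      exact mem_closedBall_zero_iff.mpr hzk
  have hFGη : ‖F η‖ = ‖G η‖ := by
    rw [hFdef, hGdef]
    simp only [hψeq z' η hη0 ζ hζ, norm_div, hη1, div_one]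
  -- sub-mean value for ‖G‖² at η
  set h : ℂ → ℂ := fun t => (G t) ^ 2 with hhdef
  have hhd : Differentiable ℂ h := hGd.pow 2
  have harea : Real.pi * ‖h η‖ ≤ ∫ t in ball η 1, ‖h t‖ :=
    area_submean h hhd η (fun ρ hρ => circle_avg h hhd η hρ)
  have hnorm : ∀ t, ‖h t‖ = ‖G t‖ ^ 2 := fun t => by rw [hhdef]; exact norm_pow _ 2
  have hset : {t : ℂ | ‖t‖ ≤ 2} = closedBall (0:ℂ) 2 := by
    ext t; simp [mem_closedBall_zero_iff]
  have hint2 : IntegrableOn (fun t => ‖G t‖ ^ 2) (closedBall (0:ℂ) 2) :=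
    ((hGd.continuous.norm.pow 2).continuousOn).integrableOn_compact (isCompact_closedBall 0 2)
  have hsub : ball η 1 ⊆ closedBall (0:ℂ) 2 := fun t ht => by
    rw [mem_closedBall]
    calc dist t 0 ≤ dist t η + dist η 0 := dist_triangle t η 0
      _ ≤ 1 + 1 := by
          refine add_le_add (le_of_lt ht) ?_
          rw [dist_zero_right, hη1]
      _ = 2 := by norm_num
  have hmono2 : (∫ t in ball η 1, ‖G t‖ ^ 2) ≤ ∫ t in closedBall (0:ℂ) 2, ‖G t‖ ^ 2 :=
    setIntegral_mono_set hint2 (Filter.Eventually.of_forall fun t => by positivity)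
      (HasSubset.Subset.eventuallyLE hsub)
  have harea2 : Real.pi * ‖G η‖ ^ 2 ≤ ∫ t in closedBall (0:ℂ) 2, ‖G t‖ ^ 2 := by
    have : (∫ t in ball η 1, ‖h t‖) = ∫ t in ball η 1, ‖G t‖ ^ 2 :=
      setIntegral_congr_fun measurableSet_ball (fun t _ => hnorm t)
    rw [← hnorm η]
    exact harea.trans (this.le.trans hmono2)
  have hfinal : ‖G η‖ ^ 2 ≤
      (1 / Real.pi) * ∫ t in closedBall (0:ℂ) 2, ‖G t‖ ^ 2 := by
    rw [one_div, inv_mul_eq_div, le_div_iff₀ Real.pi_pos, mul_comm]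
    exact harea2
  calc ‖ψ z' zk ζ‖ ^ 2 = ‖F zk‖ ^ 2 := rfl
    _ ≤ ‖F η‖ ^ 2 := pow_le_pow_left₀ (norm_nonneg _) hstep1 2
    _ = ‖G η‖ ^ 2 := by rw [hFGη]
    _ ≤ (1 / Real.pi) * ∫ t in closedBall (0:ℂ) 2, ‖G t‖ ^ 2 := hfinal
    _ = (1 / Real.pi) * ∫ t in {t : ℂ | ‖t‖ ≤ 2}, ‖g z' t ζ‖ ^ 2 := by rw [hset]
end
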